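/- arXiv:1304.5204 — 2 statements merged into one kernel-verified Lean document; each statement's English description precedes it below -/
import Mathlib

section
/- Let G be a profinite abelian group and μ : C(G, C_p) → M a continuous C_p-linear functional into a p-adic Banach space (a 'measure'). If χ : G → C_p^× is a continuous character and s ↦ χ^s (s ∈ Z_p) is the family of characters with χ^s = exp_p(s·log_p∘χ) taking values in 1 + pZ_p, then the function s ↦ μ(χ^s) is given by a convergent power series in s (in particular it is differentiable), and its derivative at s = 0 equals μ(ℓ) where ℓ = log_p∘χ : G → C_p. -/
open Polynomial Filter Finset Topology

namespace Stmt12Aux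

/-- `∏_{i<k} (X - i)` over ℤ. -/
noncomputable def ipoly (k : ℕ) : Polynomial ℤ := ∏ i ∈ Finset.range k, (X - C (i : ℤ))

lemma ipoly_natDegree_le (k : ℕ) : (ipoly k).natDegree ≤ k := by
  refine (Polynomial.natDegree_prod_le _ _).trans ?_
  refine (Finset.sum_le_card_nsmul _ _ 1 ?_).trans (by simp)
  intro i _
  refine (Polynomial.natDegree_sub_le _ _).trans ?_
  simp [Polynomial.natDegree_intCast]

lemma ipoly_coeff_eq_zero {k n : ℕ} (h : k < n) : (ipoly k).coeff n = 0 :=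
  coeff_eq_zero_of_natDegree_lt (lt_of_le_of_lt (ipoly_natDegree_le k) h)

lemma ipoly_coeff_zero {k : ℕ} (hk : k ≠ 0) : (ipoly k).coeff 0 = 0 := by
  rw [coeff_zero_eq_eval_zero, ipoly, Polynomial.eval_prod]
  exact Finset.prod_eq_zero (Finset.mem_range.mpr (Nat.pos_of_ne_zero hk)) (by simp)

lemma ipoly_coeff_one (k : ℕ) : (ipoly (k + 1)).coeff 1 = (-1) ^ k * (k.factorial : ℤ) := by
  induction k with
  | zero => simp [ipoly]
  | succ k ih =>
    rw [ipoly, Finset.prod_range_succ, ← ipoly]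
    rw [mul_sub, coeff_sub, coeff_mul_X, coeff_mul_C, ih,
      ipoly_coeff_zero (Nat.succ_ne_zero k)]
    push_cast [Nat.factorial_succ]
    ring

variable {p : ℕ} [Fact p.Prime]

lemma ipoly_eval (k : ℕ) (s : ℚ_[p]) :
    ∑ n ∈ Finset.range (k + 1), ((ipoly k).coeff n : ℚ_[p]) * s ^ n
      = ∏ i ∈ Finset.range k, (s - (i : ℚ_[p])) := by
  have hmap : ((ipoly k).map (Int.castRingHom ℚ_[p])).eval s
      = ∏ i ∈ Finset.range k, (s - (i : ℚ_[p])) := by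
    simp [ipoly, Polynomial.map_prod, Polynomial.eval_prod]
  rw [← hmap, Polynomial.eval_eq_sum_range' (n := k + 1)
    (lt_of_le_of_lt (natDegree_map_le) (Nat.lt_succ_of_le (ipoly_natDegree_le k)))]
  simp [coeff_map]

lemma binom_eq (k : ℕ) (s : ℚ_[p]) :
    (∏ i ∈ Finset.range k, ((s - (i : ℚ_[p])) / ((i : ℚ_[p]) + 1)))
      = (k.factorial : ℚ_[p])⁻¹ * ∏ i ∈ Finset.range k, (s - (i : ℚ_[p])) := by
  rw [Finset.prod_div_distrib]
  have h : (∏ i ∈ Finset.range k, ((i : ℚ_[p]) + 1)) = (k.factorial : ℚ_[p]) := by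
    rw [← Finset.prod_range_add_one_eq_factorial k]
    push_cast
    rfl
  rw [h, div_eq_inv_mul]

lemma norm_factorial (k : ℕ) :
    ‖(k.factorial : ℚ_[p])‖ = (p : ℝ) ^ (-(padicValNat p (k.factorial) : ℤ)) := by
  have h0 : ((k.factorial : ℚ)) ≠ 0 := by exact_mod_cast k.factorial_ne_zero
  have : ((k.factorial : ℚ_[p])) = (((k.factorial : ℚ)) : ℚ_[p]) := by push_cast; ring
  rw [this, Padic.eq_padicNorm, padicNorm.eq_zpow_of_nonzero h0]
  rw [show padicValRat p ((k.factorial : ℚ)) = (padicValNat p (k.factorial) : ℤ) from by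
    simp [padicValRat.of_nat]]
  push_cast
  ring

lemma padicValNat_factorial_le (hp : p ≠ 2) (k : ℕ) : padicValNat p (k.factorial) ≤ k / 2 := by
  have hprime : p.Prime := Fact.out
  have h1 : (padicValNat p (k.factorial) : ℕ∞) ≤ ((k / (p - 1) : ℕ) : ℕ∞) := by
    rw [padicValNat_eq_emultiplicity (p := p) k.factorial_ne_zero]
    exact Nat.Prime.emultiplicity_factorial_le_div_pred hprime k
  have h2 : padicValNat p (k.factorial) ≤ k / (p - 1) := by exact_mod_cast h1
  refine h2.trans (Nat.div_le_div_left ?_ (by norm_num))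
  have := hprime.two_le
  omega

end Stmt12Aux

/-- The `p`-adic binomial power series `x^s = ∑_k (s choose k) (x−1)^k`, convergent for
`x ∈ 1 + pZ_p`, `s ∈ Z_p`. -/
noncomputable def padicBinomPow {p : ℕ} [Fact p.Prime] (x : ℚ_[p]) (s : ℤ_[p]) : ℚ_[p] :=
  ∑' k : ℕ, (∏ i ∈ Finset.range k, (((s : ℚ_[p]) - (i : ℚ_[p])) / ((i : ℚ_[p]) + 1)))
    * (x - 1) ^ k

/-- The `p`-adic logarithm series `log x = ∑_k (−1)^k (x−1)^{k+1}/(k+1)`, convergent for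
`x ∈ 1 + pZ_p`. -/
noncomputable def padicLogSeries {p : ℕ} [Fact p.Prime] (x : ℚ_[p]) : ℚ_[p] :=
  ∑' k : ℕ, (-1 : ℚ_[p]) ^ k * (x - 1) ^ (k + 1) / ((k : ℚ_[p]) + 1)

open Stmt12Aux in
/-- let `μ` be an `M`-valued measure (bounded linear functional on `C(G, ℚ_p)`)
on a profinite abelian group `G`, `χ : G → 1 + pZ_p` a continuous character, and
`χ^s = exp_p (s·log_p ∘ χ)` (here given by the binomial series `Χ s`). Then `s ↦ μ (χ^s)`
is given by a convergent power series in `s ∈ Z_p` (in particular it is differentiable),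
and its derivative at `s = 0` (the linear coefficient of the series) equals `μ (log_p ∘ χ)`. -/
theorem stmt12 {p : ℕ} [Fact p.Prime] (hp : p ≠ 2)
    {G : Type*} [CommGroup G] [TopologicalSpace G] [IsTopologicalGroup G]
    [CompactSpace G] [T2Space G] [TotallyDisconnectedSpace G]
    {M : Type*} [NormedAddCommGroup M] [NormedSpace ℚ_[p] M] [CompleteSpace M]
    (μ : C(G, ℚ_[p]) →L[ℚ_[p]] M)
    (χ : C(G, ℚ_[p])) (hχ1 : χ 1 = 1)
    (hχmul : ∀ g h : G, χ (g * h) = χ g * χ h)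
    (hχval : ∀ g : G, ∃ y : ℤ_[p], χ g = 1 + p * y)
    (Χ : ℤ_[p] → C(G, ℚ_[p])) (hΧ : ∀ (s : ℤ_[p]) (g : G), Χ s g = padicBinomPow (χ g) s)
    (ℓ : C(G, ℚ_[p])) (hℓ : ∀ g : G, ℓ g = padicLogSeries (χ g)) :
    ∃ c : ℕ → M,
      (∀ s : ℤ_[p], HasSum (fun k : ℕ => ((s : ℚ_[p]) ^ k) • c k) (μ (Χ s))) ∧
      c 1 = μ ℓ := by
  classical
  haveI : Nonempty G := ⟨1⟩
  have hprime : p.Prime := Fact.out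
  have hp1R : (1 : ℝ) < (p : ℝ) := by exact_mod_cast hprime.one_lt
  have hpinv_lt : (p : ℝ)⁻¹ < 1 := by
    rw [inv_lt_one_iff₀]; right; exact hp1R
  -- the function u = χ - 1
  set u : C(G, ℚ_[p]) := χ - 1 with hu_def
  have hu_norm : ‖u‖ ≤ (p : ℝ)⁻¹ := by
    rw [ContinuousMap.norm_le _ (by positivity)]
    intro g
    obtain ⟨y, hy⟩ := hχval g
    have : u g = (p : ℚ_[p]) * (y : ℚ_[p]) := by
      simp [hu_def, hy]
    rw [this, norm_mul, Padic.norm_p]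
    calc (p : ℝ)⁻¹ * ‖(y : ℚ_[p])‖ ≤ (p : ℝ)⁻¹ * 1 := by
          gcongr
          exact y.norm_le_one
      _ = (p : ℝ)⁻¹ := mul_one _
  have hu_pow : ∀ k : ℕ, ‖u ^ k‖ ≤ ((p : ℝ)⁻¹) ^ k := fun k =>
    (norm_pow_le u k).trans (pow_le_pow_left₀ (norm_nonneg u) hu_norm k)
  -- the coefficients
  set Qc : ℕ → ℕ → ℚ_[p] :=
    fun k n => (k.factorial : ℚ_[p])⁻¹ * (((ipoly k).coeff n : ℤ) : ℚ_[p]) with hQc_def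
  set F : ℕ → ℕ → C(G, ℚ_[p]) := fun k n => Qc k n • u ^ k with hF_def
  have hF_zero : ∀ k n, k < n → F k n = 0 := by
    intro k n hkn
    simp [hF_def, hQc_def, ipoly_coeff_eq_zero hkn]
  have hQc_norm : ∀ k n, ‖Qc k n‖ ≤ (p : ℝ) ^ (padicValNat p k.factorial : ℤ) := by
    intro k n
    rw [hQc_def]
    calc ‖(k.factorial : ℚ_[p])⁻¹ * (((ipoly k).coeff n : ℤ) : ℚ_[p])‖
        = ‖(k.factorial : ℚ_[p])‖⁻¹ * ‖(((ipoly k).coeff n : ℤ) : ℚ_[p])‖ := by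
          rw [norm_mul, norm_inv]
      _ ≤ ‖(k.factorial : ℚ_[p])‖⁻¹ * 1 := by
          gcongr
          exact Padic.norm_int_le_one _
      _ = (p : ℝ) ^ (padicValNat p k.factorial : ℤ) := by
          rw [mul_one, norm_factorial, ← zpow_neg, neg_neg]
  have hF_le : ∀ k n, ‖F k n‖ ≤ ((p : ℝ)⁻¹) ^ (k - k / 2) := by
    intro k n
    have hv : padicValNat p k.factorial ≤ k / 2 := padicValNat_factorial_le hp k
    calc ‖F k n‖ ≤ ‖Qc k n‖ * ‖u ^ k‖ := norm_smul_le _ _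
      _ ≤ (p : ℝ) ^ (padicValNat p k.factorial : ℤ) * ((p : ℝ)⁻¹) ^ k :=
          mul_le_mul (hQc_norm k n) (hu_pow k) (norm_nonneg _)
            (zpow_nonneg (by positivity) _)
      _ = (p : ℝ) ^ ((padicValNat p k.factorial : ℤ) - (k : ℤ)) := by
          rw [inv_pow, ← zpow_natCast, ← zpow_neg, ← zpow_add₀ (by positivity), sub_eq_add_neg]
      _ ≤ (p : ℝ) ^ (-((k - k / 2 : ℕ) : ℤ)) := by
          apply zpow_le_zpow_right₀ hp1R.le
          omega
      _ = ((p : ℝ)⁻¹) ^ (k - k / 2) := by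
          rw [zpow_neg, ← inv_zpow, zpow_natCast]
  have hdecay : Tendsto (fun k : ℕ => ((p : ℝ)⁻¹) ^ (k - k / 2)) atTop (𝓝 0) :=
    (tendsto_pow_atTop_nhds_zero_of_lt_one (by positivity) hpinv_lt).comp
      (tendsto_atTop_atTop.mpr fun b => ⟨2 * b, fun a ha => by omega⟩)
  -- summability of the double family
  have hTsum : ∀ s : ℤ_[p],
      Summable (fun x : ℕ × ℕ => ((s : ℚ_[p]) ^ x.2) • F x.1 x.2) := by
    intro s
    apply NonarchimedeanAddGroup.summable_of_tendsto_cofinite_zero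
    rw [tendsto_zero_iff_norm_tendsto_zero]
    have hle : ∀ x : ℕ × ℕ, ‖((s : ℚ_[p]) ^ x.2) • F x.1 x.2‖
        ≤ (if x.2 ≤ x.1 then ((p : ℝ)⁻¹) ^ (x.1 - x.1 / 2) else 0) := by
      rintro ⟨k, n⟩
      by_cases hkn : n ≤ k
      · simp only [hkn, if_true]
        calc ‖((s : ℚ_[p]) ^ n) • F k n‖ ≤ ‖(s : ℚ_[p]) ^ n‖ * ‖F k n‖ := norm_smul_le _ _
          _ ≤ 1 * ((p : ℝ)⁻¹) ^ (k - k / 2) := by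
              gcongr
              · have : ‖(s : ℚ_[p]) ^ n‖ = ‖((s ^ n : ℤ_[p]) : ℚ_[p])‖ := by push_cast; rfl
                rw [this, PadicInt.padic_norm_e_of_padicInt]
                exact (s ^ n).norm_le_one
              · exact hF_le k n
          _ = ((p : ℝ)⁻¹) ^ (k - k / 2) := one_mul _
      · rw [hF_zero k n (by omega), if_neg hkn, smul_zero, norm_zero]
    refine squeeze_zero (fun x => norm_nonneg _) hle ?_
    rw [Metric.tendsto_nhds]
    intro ε hε
    rw [eventually_cofinite]
    obtain ⟨K, hK⟩ := (hdecay.eventually (gt_mem_nhds hε)).exists_forall_of_atTop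
    refine Set.Finite.subset ((Set.finite_Iio K).prod (Set.finite_Iio K)) ?_
    rintro ⟨k, n⟩ hx
    simp only [Set.mem_setOf_eq, dist_zero_right, Real.norm_eq_abs] at hx
    by_cases hkn : n ≤ k
    · rw [if_pos hkn] at hx
      have hkK : k < K := by
        by_contra hcon
        exact hx (by rw [abs_of_nonneg (by positivity)]; exact hK k (by omega))
      exact ⟨hkK, by exact Set.mem_Iio.mpr (by omega)⟩
    · rw [if_neg hkn] at hx
      exact absurd (by simpa using hε) hx
  -- summability of columns
  have hsummF : ∀ n : ℕ, Summable fun k => F k n := by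
    intro n
    apply NonarchimedeanAddGroup.summable_of_tendsto_cofinite_zero
    rw [Nat.cofinite_eq_atTop, tendsto_zero_iff_norm_tendsto_zero]
    exact squeeze_zero (fun _ => norm_nonneg _) (fun k => hF_le k n) hdecay
  set a : ℕ → C(G, ℚ_[p]) := fun n => ∑' k, F k n with ha_def
  -- evaluation of sums in C(G, ℚ_[p])
  have evalHS : ∀ (f : ℕ → C(G, ℚ_[p])) (L : C(G, ℚ_[p])) (g : G),
      HasSum f L → HasSum (fun k => f k g) (L g) := by
    intro f L g h
    have := h.mapL (ContinuousMap.evalCLM ℚ_[p] g)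
    simpa [ContinuousMap.evalCLM] using this
  -- the main HasSum statement
  have main : ∀ s : ℤ_[p], HasSum (fun n => ((s : ℚ_[p]) ^ n) • a n) (Χ s) := by
    intro s
    have hT := (hTsum s).hasSum
    have hrow : ∀ k, HasSum (fun n => ((s : ℚ_[p]) ^ n) • F k n)
        ((∏ i ∈ Finset.range k, (((s : ℚ_[p]) - (i : ℚ_[p])) / ((i : ℚ_[p]) + 1))) • u ^ k) := by
      intro k
      have h0 : ∀ n ∉ Finset.range (k + 1), ((s : ℚ_[p]) ^ n) • F k n = 0 := by
        intro n hn
        rw [hF_zero k n (by simpa using hn), smul_zero]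
      have hsum := hasSum_sum_of_ne_finset_zero (L := SummationFilter.unconditional ℕ) h0
      have heq : (∑ n ∈ Finset.range (k + 1), ((s : ℚ_[p]) ^ n) • F k n)
          = (∏ i ∈ Finset.range k, (((s : ℚ_[p]) - (i : ℚ_[p])) / ((i : ℚ_[p]) + 1))) • u ^ k := by
        rw [binom_eq]
        have hsmul : (∑ n ∈ Finset.range (k + 1), ((s : ℚ_[p]) ^ n) • F k n)
            = (∑ n ∈ Finset.range (k + 1), (Qc k n * (s : ℚ_[p]) ^ n)) • u ^ k := by
          rw [Finset.sum_smul]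
          refine Finset.sum_congr rfl fun n _ => ?_
          rw [hF_def, smul_smul, mul_comm]
        rw [hsmul]
        congr 1
        have hev := ipoly_eval (p := p) k (s : ℚ_[p])
        calc (∑ n ∈ Finset.range (k + 1), Qc k n * (s : ℚ_[p]) ^ n)
            = (k.factorial : ℚ_[p])⁻¹ *
              ∑ n ∈ Finset.range (k + 1), (((ipoly k).coeff n : ℤ) : ℚ_[p]) * (s : ℚ_[p]) ^ n := by
              rw [Finset.mul_sum]
              refine Finset.sum_congr rfl fun n _ => ?_
              rw [hQc_def, mul_assoc]
          _ = (k.factorial : ℚ_[p])⁻¹ * ∏ i ∈ Finset.range k, ((s : ℚ_[p]) - (i : ℚ_[p])) := by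
              rw [hev]
      exact heq ▸ hsum
    have hcol : ∀ n, HasSum (fun k => ((s : ℚ_[p]) ^ n) • F k n) (((s : ℚ_[p]) ^ n) • a n) :=
      fun n => (hsummF n).hasSum.const_smul _
    have h1 : HasSum
        (fun k => (∏ i ∈ Finset.range k, (((s : ℚ_[p]) - (i : ℚ_[p])) / ((i : ℚ_[p]) + 1))) • u ^ k)
        (∑' x : ℕ × ℕ, ((s : ℚ_[p]) ^ x.2) • F x.1 x.2) := hT.prod_fiberwise hrow
    have h2 : HasSum (fun n => ((s : ℚ_[p]) ^ n) • a n)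
        (∑' x : ℕ × ℕ, ((s : ℚ_[p]) ^ x.2) • F x.1 x.2) := by
      have hswap : HasSum (fun x : ℕ × ℕ => ((s : ℚ_[p]) ^ x.1) • F x.2 x.1)
          (∑' x : ℕ × ℕ, ((s : ℚ_[p]) ^ x.2) • F x.1 x.2) := by
        have := (Equiv.prodComm ℕ ℕ).hasSum_iff.mpr hT
        simpa [Function.comp_def, Equiv.prodComm] using this
      exact hswap.prod_fiberwise hcol
    have hXs : (∑' x : ℕ × ℕ, ((s : ℚ_[p]) ^ x.2) • F x.1 x.2) = Χ s := by
      ext g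
      have h1g := evalHS _ _ g h1
      have h1g' : HasSum
          (fun k => (∏ i ∈ Finset.range k, (((s : ℚ_[p]) - (i : ℚ_[p])) / ((i : ℚ_[p]) + 1)))
            * (χ g - 1) ^ k)
          ((∑' x : ℕ × ℕ, ((s : ℚ_[p]) ^ x.2) • F x.1 x.2) g) := by
        simpa [hu_def] using h1g
      rw [hΧ s g, padicBinomPow]
      exact h1g'.tsum_eq.symm
    exact hXs ▸ h2
  refine ⟨fun n => μ (a n), ?_, ?_⟩
  · intro s
    have := (main s).mapL μ
    simpa only [map_smul] using this
  · have ha1 : a 1 = ℓ := by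
      ext g
      have hg := evalHS _ _ g (hsummF 1).hasSum
      have hg' : HasSum (fun k => Qc k 1 * (χ g - 1) ^ k) (a 1 g) := by
        simpa [hF_def, hu_def] using hg
      have h0 : Qc 0 1 = 0 := by
        simp [hQc_def, ipoly, Polynomial.coeff_one]
      have hshift : HasSum (fun k => Qc (k + 1) 1 * (χ g - 1) ^ (k + 1)) (a 1 g) := by
        have := (hasSum_nat_add_iff' 1).mpr hg'
        simpa [h0] using this
      have hterm : ∀ k : ℕ, Qc (k + 1) 1 * (χ g - 1) ^ (k + 1)
          = (-1 : ℚ_[p]) ^ k * (χ g - 1) ^ (k + 1) / ((k : ℚ_[p]) + 1) := by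
        intro k
        have hcoeff : Qc (k + 1) 1 = (-1 : ℚ_[p]) ^ k / ((k : ℚ_[p]) + 1) := by
          simp only [hQc_def]
          rw [ipoly_coeff_one]
          have h1 : (((k + 1).factorial : ℚ_[p])) = ((k : ℚ_[p]) + 1) * (k.factorial : ℚ_[p]) := by
            rw [Nat.factorial_succ]; push_cast; ring
          have h2 : (k.factorial : ℚ_[p]) ≠ 0 := by
            exact_mod_cast k.factorial_ne_zero
          have h3 : ((k : ℚ_[p]) + 1) ≠ 0 := Nat.cast_add_one_ne_zero k
          rw [h1]
          push_cast
          field_simp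
        rw [hcoeff]
        ring
      have hfinal : HasSum
          (fun k : ℕ => (-1 : ℚ_[p]) ^ k * (χ g - 1) ^ (k + 1) / ((k : ℚ_[p]) + 1)) (a 1 g) := by
        simpa only [hterm] using hshift
      rw [hℓ, padicLogSeries]
      exact hfinal.tsum_eq.symm
    show μ (a 1) = μ ℓ
    rw [ha1]
end

section
/- Let α ∈ Z_p^× be a unit and define the sequence of operators on sequences a : N → Q_p by (U a)(n) = a(n+1). If a satisfies (U − α)³ a = 0 and additionally v_p(a(n)) ≥ n − C for some constant C and all n, then a = 0. -/
open Filter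

lemma aux_tendsto {p : ℕ} (hp : 1 < p) (C : ℤ) :
    Tendsto (fun n : ℕ => (p : ℝ) ^ (C - (n : ℤ))) atTop (nhds 0) := by
  have hp' : (1:ℝ) < p := by exact_mod_cast hp
  have hr : |(p:ℝ)⁻¹| < 1 := by
    rw [abs_of_pos (by positivity)]
    exact inv_lt_one_of_one_lt₀ hp'
  have h := (tendsto_pow_atTop_nhds_zero_of_lt_one (by positivity) (inv_lt_one_of_one_lt₀ hp')).const_mul ((p:ℝ)^C)
  simp only [mul_zero] at h
  refine h.congr fun n => ?_
  rw [zpow_sub₀ (by positivity), div_eq_mul_inv, inv_pow, ← zpow_natCast (p:ℝ) n]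


lemma aux_const {p : ℕ} [hp : Fact p.Prime] (C : ℤ) (d : ℕ → ℚ_[p])
    (hc : ∀ n, d (n + 1) = d n) (hb : ∀ n, ‖d n‖ ≤ (p : ℝ) ^ (C - (n : ℤ))) :
    ∀ n, d n = 0 := by
  have hconst : ∀ n, d n = d 0 := by
    intro n; induction n with
    | zero => rfl
    | succ k ih => rw [hc k, ih]
  have h0 : ‖d 0‖ ≤ 0 :=
    le_of_tendsto_of_tendsto' tendsto_const_nhds (aux_tendsto hp.out.one_lt C)
      (fun n => by rw [← hconst n]; exact hb n)
  intro n
  rw [hconst n, ← norm_le_zero_iff]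
  exact h0


/-- let `α ∈ Z_p^×` be a unit and `U` the shift operator on sequences
`a : ℕ → ℚ_p`. If `(U − α)³ a = 0` and `v_p (a n) ≥ n − C` for a constant `C` and all `n`
(i.e. `‖a n‖ ≤ p^{C−n}`), then `a = 0`. -/
theorem stmt17 {p : ℕ} [Fact p.Prime] (α : ℚ_[p]) (hα : ‖α‖ = 1)
    (a : ℕ → ℚ_[p]) (C : ℤ)
    (h3 : ∀ n : ℕ,
      a (n + 3) - 3 * α * a (n + 2) + 3 * α ^ 2 * a (n + 1) - α ^ 3 * a n = 0)
    (hg : ∀ n : ℕ, ‖a n‖ ≤ (p : ℝ) ^ (C - (n : ℤ))) :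
    ∀ n : ℕ, a n = 0 := by

  have hα0 : α ≠ 0 := by intro h; rw [h, norm_zero] at hα; norm_num at hα
  have hp1 : (1:ℝ) ≤ (p:ℝ) := by exact_mod_cast (Fact.out : p.Prime).one_lt.le
  set b : ℕ → ℚ_[p] := fun n => a n / α ^ n with hb
  have hbnorm : ∀ n, ‖b n‖ = ‖a n‖ := by
    intro n
    simp [hb, norm_div, norm_pow, hα]
  have hbg : ∀ n, ‖b n‖ ≤ (p : ℝ) ^ (C - (n : ℤ)) := fun n => (hbnorm n) ▸ hg n
  have hmono : ∀ (n k : ℕ), (p:ℝ) ^ (C - ((n + k : ℕ) : ℤ)) ≤ (p:ℝ) ^ (C - (n:ℤ)) := by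
    intro n k
    apply zpow_le_zpow_right₀ hp1
    push_cast; omega
  have hbg' : ∀ (n k : ℕ), ‖b (n + k)‖ ≤ (p:ℝ) ^ (C - (n:ℤ)) :=
    fun n k => (hbg (n + k)).trans (hmono n k)
  have hsub : ∀ x y : ℚ_[p], ‖x - y‖ ≤ max ‖x‖ ‖y‖ := by
    intro x y
    rw [sub_eq_add_neg]
    exact (Padic.nonarchimedean _ _).trans (by rw [norm_neg])
  have h2le : ‖(2 : ℚ_[p])‖ ≤ 1 := by
    have := Padic.norm_int_le_one (p := p) 2
    simpa using this
  have hrec : ∀ n, b (n + 3) - 3 * b (n + 2) + 3 * b (n + 1) - b n = 0 := by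
    intro n
    have h := h3 n
    have hpow : (α : ℚ_[p]) ^ n ≠ 0 := pow_ne_zero _ hα0
    have ha : ∀ k, a k = b k * α ^ k := fun k => by
      simp [hb, div_mul_cancel₀ _ (pow_ne_zero k hα0)]
    rw [ha (n+3), ha (n+2), ha (n+1), ha n] at h
    have h2 : α ^ (n+3) * (b (n + 3) - 3 * b (n + 2) + 3 * b (n + 1) - b n) = 0 := by
      linear_combination h
    exact (mul_eq_zero.mp h2).resolve_left (pow_ne_zero _ hα0)
  -- second difference
  set e : ℕ → ℚ_[p] := fun n => b (n + 2) - 2 * b (n + 1) + b n with he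
  have heconst : ∀ n, e (n + 1) = e n := by
    intro n
    show b (n + 3) - 2 * b (n + 2) + b (n + 1) = b (n + 2) - 2 * b (n + 1) + b n
    linear_combination hrec n
  have hebound : ∀ n, ‖e n‖ ≤ (p:ℝ) ^ (C - (n:ℤ)) := by
    intro n
    have h1 : ‖b (n + 2) - 2 * b (n + 1)‖ ≤ (p:ℝ) ^ (C - (n:ℤ)) := by
      apply (hsub _ _).trans
      apply max_le (hbg' n 2)
      ·
        calc ‖2 * b (n+1)‖ = ‖(2:ℚ_[p])‖ * ‖b (n+1)‖ := norm_mul _ _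
          _ ≤ 1 * ((p:ℝ) ^ (C - (n:ℤ))) := mul_le_mul h2le (hbg' n 1) (norm_nonneg _) zero_le_one
          _ = _ := one_mul _
    refine (Padic.nonarchimedean _ _).trans (max_le h1 ?_)
    simpa using hbg' n 0
  have he0 : ∀ n, e n = 0 := aux_const C e heconst hebound
  -- first difference
  set f : ℕ → ℚ_[p] := fun n => b (n + 1) - b n with hf
  have hfconst : ∀ n, f (n + 1) = f n := by
    intro n
    have := he0 n
    simp only [he] at this
    show b (n + 2) - b (n + 1) = b (n + 1) - b n
    linear_combination this
  have hfbound : ∀ n, ‖f n‖ ≤ (p:ℝ) ^ (C - (n:ℤ)) := by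
    intro n
    refine (hsub _ _).trans (max_le (hbg' n 1) ?_)
    simpa using hbg' n 0
  have hf0 : ∀ n, f n = 0 := aux_const C f hfconst hfbound
  have hbconst : ∀ n, b (n + 1) = b n := by
    intro n
    have := hf0 n
    simp only [hf] at this
    linear_combination this
  have hb0 : ∀ n, b n = 0 := aux_const C b hbconst hbg
  intro n
  have := hb0 n
  simp only [hb] at this
  field_simp at this
  simpa using this
end
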